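/- arXiv:2205.09432 — 3 statements merged into one kernel-verified Lean document; each statement's English description precedes it below -/
import Mathlib

section
/- Let A be a smooth operator field on an open set U ⊆ ℝⁿ and let f, g : U → ℝ be smooth functions. Define the operator field f·Id + g·A by (f·Id + g·A)(x) = f(x)·Id + g(x)·A(x). Then for all smooth vector fields X, Y and all x ∈ U, the Haantjes torsions satisfy H_{f·Id + g·A}(X,Y)(x) = g(x)⁴ · H_A(X,Y)(x). -/
noncomputable section

/-- Points of ℝⁿ, modeled as `Fin n → ℝ`. -/
abbrev Vec (n : ℕ) := Fin n → ℝ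

/-- Vector fields on (an open subset of) ℝⁿ. -/
abbrev VF (n : ℕ) := Vec n → Vec n

/-- Operator fields: smooth (1,1)-tensor fields, i.e. maps U → (ℝⁿ →L[ℝ] ℝⁿ). -/
abbrev OpField (n : ℕ) := Vec n → (Vec n →L[ℝ] Vec n)

/-- Lie bracket of vector fields: [V,W](x) = DW(x)(V(x)) − DV(x)(W(x)). -/
noncomputable def lieBracket {n : ℕ} (V W : VF n) : VF n :=
  fun x => fderiv ℝ W x (V x) - fderiv ℝ V x (W x)

/-- Action of an operator field on a vector field: (A V)(x) = A(x)(V(x)). -/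
noncomputable def opApp {n : ℕ} (A : OpField n) (V : VF n) : VF n := fun x => A x (V x)

/-- Generalized Nijenhuis torsion of level m:
τ⁽⁰⁾_A(V,W) = [V,W] and
τ⁽ᵐ⁾_A(V,W) = A²τ⁽ᵐ⁻¹⁾_A(V,W) + τ⁽ᵐ⁻¹⁾_A(AV,AW) − A(τ⁽ᵐ⁻¹⁾_A(V,AW) + τ⁽ᵐ⁻¹⁾_A(AV,W)).
Level 1 is the Nijenhuis torsion, level 2 the Haantjes torsion. -/
noncomputable def genTorsion {n : ℕ} (A : OpField n) : ℕ → VF n → VF n → VF n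
  | 0, V, W => lieBracket V W
  | (m+1), V, W => fun x =>
      A x (A x (genTorsion A m V W x))
      + genTorsion A m (opApp A V) (opApp A W) x
      - A x (genTorsion A m V (opApp A W) x + genTorsion A m (opApp A V) W x)

/-!
Write `torsionStep A T` for the recursion that produces `τ⁽ᵐ⁺¹⁾_A` from `T = τ⁽ᵐ⁾_A`, so that
`H_A = torsionStep A τ_A`. Three facts combine. First, for `C = f Id + g A` and any tensorial
(function-bilinear) `T`, `torsionStep C T = g² torsionStep A T`: expanding `C = f + g A` in each
slot, every term containing `f` cancels. Second, `τ_C = g² τ_A + g E`, where `E(v, w)` is a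
combination of `γ(v) P w - γ(w) P v` with `γ` among `df, dg, df ∘ A, dg ∘ A` and `P` among
`1, A, A²`. Third, `torsionStep A` kills every such pointwise term, because `P` commutes with `A`.
Hence `H_C = g² torsionStep A (g² τ_A + g E) = g⁴ H_A`.
-/

section Algebra

variable {R M : Type*} [CommRing R] [AddCommGroup M] [Module R M]

def torsionForm (a : Module.End R M) (K : M → M → M) (v w : M) : M :=
  a (a (K v w)) + K (a v) (a w) - a (K v (a w) + K (a v) w)

def wedgeForm (γ : Module.Dual R M) (P : Module.End R M) (v w : M) : M :=
  γ v • P w - γ w • P v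

lemma torsionForm_add (a : Module.End R M) (K L : M → M → M) :
    torsionForm a (K + L) = torsionForm a K + torsionForm a L := by
  ext v w
  simp only [torsionForm, Pi.add_apply, map_add]
  abel

lemma torsionForm_sub (a : Module.End R M) (K L : M → M → M) :
    torsionForm a (K - L) = torsionForm a K - torsionForm a L := by
  ext v w
  simp only [torsionForm, Pi.sub_apply, map_sub, map_add]
  abel

lemma torsionForm_wedgeForm {a P : Module.End R M} (h : Commute a P) (γ : Module.Dual R M) :
    torsionForm a (wedgeForm γ P) = 0 := by
  have hP (v : M) : P (a v) = a (P v) := (LinearMap.congr_fun h.eq v).symm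
  ext v w
  simp only [torsionForm, wedgeForm, hP, map_sub, map_add, map_smul, Pi.zero_apply]
  abel

def torsionCorrection (α β : Module.Dual R M) (a : Module.End R M) : M → M → M :=
  wedgeForm (α ∘ₗ a) 1 - wedgeForm α a + wedgeForm (β ∘ₗ a) a - wedgeForm β (a * a)

lemma torsionForm_torsionCorrection (α β : Module.Dual R M) (a : Module.End R M) :
    torsionForm a (torsionCorrection α β a) = 0 := by
  simp only [torsionCorrection, torsionForm_add, torsionForm_sub,
    torsionForm_wedgeForm (Commute.one_right a), torsionForm_wedgeForm (Commute.refl a),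
    torsionForm_wedgeForm ((Commute.refl a).mul_right (Commute.refl a)), sub_zero, add_zero]

end Algebra

section VectorFields

variable {n : ℕ}

lemma lieBracket_comm (V W : VF n) : lieBracket W V = -lieBracket V W := by
  ext x
  simp [lieBracket]

lemma lieBracket_smul_add_left {φ ψ : Vec n → ℝ} {V V' : VF n} (W : VF n) {x : Vec n}
    (hφ : DifferentiableAt ℝ φ x) (hψ : DifferentiableAt ℝ ψ x)
    (hV : DifferentiableAt ℝ V x) (hV' : DifferentiableAt ℝ V' x) :
    lieBracket (fun y => φ y • V y + ψ y • V' y) W x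
      = φ x • lieBracket V W x + ψ x • lieBracket V' W x
        - fderiv ℝ φ x (W x) • V x - fderiv ℝ ψ x (W x) • V' x := by
  have hD : HasFDerivAt (fun y => φ y • V y + ψ y • V' y) _ x :=
    (hφ.hasFDerivAt.smul hV.hasFDerivAt).add (hψ.hasFDerivAt.smul hV'.hasFDerivAt)
  simp only [lieBracket, hD.fderiv, map_add, map_smul, add_apply,
    smul_apply, ContinuousLinearMap.smulRight_apply]
  module

lemma lieBracket_smul_add_right (V : VF n) {φ ψ : Vec n → ℝ} {W W' : VF n} {x : Vec n}
    (hφ : DifferentiableAt ℝ φ x) (hψ : DifferentiableAt ℝ ψ x)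
    (hW : DifferentiableAt ℝ W x) (hW' : DifferentiableAt ℝ W' x) :
    lieBracket V (fun y => φ y • W y + ψ y • W' y) x
      = φ x • lieBracket V W x + ψ x • lieBracket V W' x
        + fderiv ℝ φ x (V x) • W x + fderiv ℝ ψ x (V x) • W' x := by
  rw [lieBracket_comm, Pi.neg_apply, lieBracket_smul_add_left V hφ hψ hW hW',
    lieBracket_comm W, lieBracket_comm W']
  simp only [Pi.neg_apply]
  module

lemma lieBracket_congr_on {U : Set (Vec n)} (hU : IsOpen U) {V V' W W' : VF n}
    (hV : U.EqOn V V') (hW : U.EqOn W W') : U.EqOn (lieBracket V W) (lieBracket V' W') := by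
  intro x hx
  simp only [lieBracket, (hV.eventuallyEq_of_mem (hU.mem_nhds hx)).fderiv_eq,
    (hW.eventuallyEq_of_mem (hU.mem_nhds hx)).fderiv_eq, hV hx, hW hx]

def torsionStep (A : OpField n) (T : VF n → VF n → VF n) : VF n → VF n → VF n :=
  fun V W x => A x (A x (T V W x)) + T (opApp A V) (opApp A W) x
    - A x (T V (opApp A W) x + T (opApp A V) W x)

lemma genTorsion_zero (A : OpField n) : genTorsion A 0 = lieBracket := rfl

lemma genTorsion_succ (A : OpField n) (m : ℕ) :
    genTorsion A (m + 1) = torsionStep A (genTorsion A m) := rfl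

lemma opApp_apply (A : OpField n) (V : VF n) (x : Vec n) : opApp A V x = A x (V x) := rfl

lemma opApp_smul_add (A : OpField n) (φ ψ : Vec n → ℝ) (V V' : VF n) :
    opApp A (fun y => φ y • V y + ψ y • V' y)
      = fun y => φ y • opApp A V y + ψ y • opApp A V' y := by
  ext1 y
  simp only [opApp, map_add, map_smul]

lemma opApp_smul_id_add_smul (A : OpField n) (f g : Vec n → ℝ) (V : VF n) :
    opApp (fun y => f y • ContinuousLinearMap.id ℝ (Vec n) + g y • A y) V
      = fun y => f y • V y + g y • opApp A V y := rfl

lemma DifferentiableAt.opApp {A : OpField n} {V : VF n} {x : Vec n} (hA : DifferentiableAt ℝ A x)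
    (hV : DifferentiableAt ℝ V x) : DifferentiableAt ℝ (opApp A V) x :=
  hA.clm_apply hV

lemma DifferentiableOn.opApp {A : OpField n} {V : VF n} {U : Set (Vec n)}
    (hA : DifferentiableOn ℝ A U) (hV : DifferentiableOn ℝ V U) :
    DifferentiableOn ℝ (opApp A V) U :=
  hA.clm_apply hV

lemma genTorsion_comm (A : OpField n) (m : ℕ) (V W : VF n) :
    genTorsion A m W V = -genTorsion A m V W := by
  induction m generalizing V W with
  | zero => exact lieBracket_comm V W
  | succ m ih =>
    funext x
    simp only [genTorsion_succ, Pi.neg_apply, torsionStep]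
    rw [ih V W, ih (opApp A V) (opApp A W), ih (opApp A V) W, ih V (opApp A W)]
    simp only [Pi.neg_apply, map_neg, map_add]
    abel

lemma genTorsion_congr_on {U : Set (Vec n)} (hU : IsOpen U) {B B' : OpField n} (hB : U.EqOn B B')
    (m : ℕ) {V V' W W' : VF n} (hV : U.EqOn V V') (hW : U.EqOn W W') :
    U.EqOn (genTorsion B m V W) (genTorsion B' m V' W') := by
  induction m generalizing V V' W W' with
  | zero => exact lieBracket_congr_on hU hV hW
  | succ m ih =>
    have hBV : U.EqOn (opApp B V) (opApp B' V') := fun y hy => by simp only [opApp, hB hy, hV hy]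
    have hBW : U.EqOn (opApp B W) (opApp B' W') := fun y hy => by simp only [opApp, hB hy, hW hy]
    intro x hx
    simp only [genTorsion_succ, torsionStep, hB hx, ih hV hW hx, ih hBV hBW hx, ih hV hBW hx,
      ih hBV hW hx]

structure IsTensorialOn (U : Set (Vec n)) (T : VF n → VF n → VF n) : Prop where
  smul_add_left : ∀ {φ ψ : Vec n → ℝ} {V V' : VF n} (W : VF n), DifferentiableOn ℝ φ U →
    DifferentiableOn ℝ ψ U → DifferentiableOn ℝ V U → DifferentiableOn ℝ V' U → ∀ x ∈ U,
      T (fun y => φ y • V y + ψ y • V' y) W x = φ x • T V W x + ψ x • T V' W x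
  smul_add_right : ∀ (V : VF n) {φ ψ : Vec n → ℝ} {W W' : VF n}, DifferentiableOn ℝ φ U →
    DifferentiableOn ℝ ψ U → DifferentiableOn ℝ W U → DifferentiableOn ℝ W' U → ∀ x ∈ U,
      T V (fun y => φ y • W y + ψ y • W' y) x = φ x • T V W x + ψ x • T V W' x

lemma isTensorialOn_nijenhuis {U : Set (Vec n)} (hU : IsOpen U) {A : OpField n}
    (hA : DifferentiableOn ℝ A U) : IsTensorialOn U (genTorsion A 1) := by
  have left {φ ψ : Vec n → ℝ} {V V' : VF n} (W : VF n) (hφ : DifferentiableOn ℝ φ U)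
      (hψ : DifferentiableOn ℝ ψ U) (hV : DifferentiableOn ℝ V U) (hV' : DifferentiableOn ℝ V' U)
      (x : Vec n) (hx : x ∈ U) :
      genTorsion A 1 (fun y => φ y • V y + ψ y • V' y) W x
        = φ x • genTorsion A 1 V W x + ψ x • genTorsion A 1 V' W x := by
    have hxU := hU.mem_nhds hx
    have hφx := hφ.differentiableAt hxU
    have hψx := hψ.differentiableAt hxU
    simp only [genTorsion_succ, genTorsion_zero, torsionStep, opApp_smul_add,
      lieBracket_smul_add_left _ hφx hψx (hV.differentiableAt hxU) (hV'.differentiableAt hxU),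
      lieBracket_smul_add_left _ hφx hψx ((hA.opApp hV).differentiableAt hxU)
        ((hA.opApp hV').differentiableAt hxU),
      map_add, map_sub, map_smul]
    simp only [opApp_apply]
    module
  refine ⟨left, fun V φ ψ W W' hφ hψ hW hW' x hx => ?_⟩
  rw [genTorsion_comm A 1 _ V, Pi.neg_apply, left V hφ hψ hW hW' x hx, genTorsion_comm A 1 W V,
    genTorsion_comm A 1 W' V]
  simp only [Pi.neg_apply]
  module

lemma nijenhuis_smul_id_add_smul {A : OpField n} {f g : Vec n → ℝ} {V W : VF n} {x : Vec n}
    (hA : DifferentiableAt ℝ A x) (hf : DifferentiableAt ℝ f x) (hg : DifferentiableAt ℝ g x)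
    (hV : DifferentiableAt ℝ V x) (hW : DifferentiableAt ℝ W x) :
    genTorsion (fun y => f y • ContinuousLinearMap.id ℝ (Vec n) + g y • A y) 1 V W x
      = g x ^ 2 • genTorsion A 1 V W x
        + g x • torsionCorrection (fderiv ℝ f x : Vec n →ₗ[ℝ] ℝ) (fderiv ℝ g x) (A x)
          (V x) (W x) := by
  simp only [genTorsion_succ, genTorsion_zero, torsionStep, opApp_smul_id_add_smul,
    lieBracket_smul_add_left _ hf hg hV (hA.opApp hV),
    lieBracket_smul_add_right _ hf hg hW (hA.opApp hW)]
  simp only [torsionCorrection, wedgeForm, opApp_apply, add_apply, smul_apply,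
    ContinuousLinearMap.id_apply, map_add, map_sub, map_smul, Pi.add_apply, Pi.sub_apply,
    LinearMap.comp_apply, ContinuousLinearMap.coe_coe, Module.End.mul_apply, Module.End.one_apply,
    smul_eq_mul]
  module

lemma torsionStep_smul_id_add_smul {U : Set (Vec n)} {A : OpField n} {f g : Vec n → ℝ}
    {T : VF n → VF n → VF n} (hT : IsTensorialOn U T) (hA : DifferentiableOn ℝ A U)
    (hf : DifferentiableOn ℝ f U) (hg : DifferentiableOn ℝ g U) {X Y : VF n}
    (hX : DifferentiableOn ℝ X U) (hY : DifferentiableOn ℝ Y U) {x : Vec n} (hx : x ∈ U) :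
    torsionStep (fun y => f y • ContinuousLinearMap.id ℝ (Vec n) + g y • A y) T X Y x
      = g x ^ 2 • torsionStep A T X Y x := by
  simp only [torsionStep, opApp_smul_id_add_smul,
    hT.smul_add_left _ hf hg hX (hA.opApp hX) x hx, hT.smul_add_right _ hf hg hY (hA.opApp hY) x hx]
  simp only [add_apply, smul_apply, ContinuousLinearMap.id_apply, map_add, map_smul]
  module

lemma torsionStep_apply_eq_smul_add_torsionForm {A : OpField n} {T T' : VF n → VF n → VF n}
    {K : Vec n → Vec n → Vec n} {c d : ℝ} {x : Vec n} (hA : DifferentiableAt ℝ A x)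
    (h : ∀ V W : VF n, DifferentiableAt ℝ V x → DifferentiableAt ℝ W x →
      T V W x = c • T' V W x + d • K (V x) (W x))
    {X Y : VF n} (hX : DifferentiableAt ℝ X x) (hY : DifferentiableAt ℝ Y x) :
    torsionStep A T X Y x
      = c • torsionStep A T' X Y x + d • torsionForm (A x : Vec n →ₗ[ℝ] Vec n) K (X x) (Y x) := by
  simp only [torsionStep, torsionForm, h X Y hX hY, h _ _ (hA.opApp hX) (hA.opApp hY),
    h _ _ hX (hA.opApp hY), h _ _ (hA.opApp hX) hY, opApp_apply, ContinuousLinearMap.coe_coe,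
    map_add, map_smul]
  module

end VectorFields

/-- For smooth f, g and a smooth operator field A on an open U ⊆ ℝⁿ,
the Haantjes torsion of f·Id + g·A satisfies H_{f·Id+g·A}(X,Y)(x) = g(x)⁴·H_A(X,Y)(x). -/
theorem haantjes_f_id_plus_g_A {n : ℕ} (U : Set (Vec n)) (hU : IsOpen U)
    (A : OpField n) (hA : ContDiffOn ℝ (⊤ : ℕ∞) A U)
    (f g : Vec n → ℝ) (hf : ContDiffOn ℝ (⊤ : ℕ∞) f U) (hg : ContDiffOn ℝ (⊤ : ℕ∞) g U)
    (B : OpField n)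
    (hB : ∀ x ∈ U, B x = f x • ContinuousLinearMap.id ℝ (Vec n) + g x • A x) :
    ∀ X Y : VF n, ContDiffOn ℝ (⊤ : ℕ∞) X U → ContDiffOn ℝ (⊤ : ℕ∞) Y U →
      ∀ x ∈ U, genTorsion B 2 X Y x = (g x) ^ 4 • genTorsion A 2 X Y x := by
  intro X Y hX hY x hx
  replace hA := hA.differentiableOn (by simp)
  replace hf := hf.differentiableOn (by simp)
  replace hg := hg.differentiableOn (by simp)
  replace hX := hX.differentiableOn (by simp)
  replace hY := hY.differentiableOn (by simp)
  have hxU := hU.mem_nhds hx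
  set C : OpField n := fun y => f y • ContinuousLinearMap.id ℝ (Vec n) + g y • A y
  have hC : DifferentiableOn ℝ C U := (hf.smul_const _).add (hg.smul hA)
  have hτC (V W : VF n) (hV : DifferentiableAt ℝ V x) (hW : DifferentiableAt ℝ W x) :=
    nijenhuis_smul_id_add_smul (hA.differentiableAt hxU) (hf.differentiableAt hxU)
      (hg.differentiableAt hxU) hV hW
  calc genTorsion B 2 X Y x = torsionStep C (genTorsion C 1) X Y x :=
        genTorsion_congr_on hU hB 2 (Set.eqOn_refl _ _) (Set.eqOn_refl _ _) hx
    _ = g x ^ 2 • torsionStep A (genTorsion C 1) X Y x :=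
        torsionStep_smul_id_add_smul (isTensorialOn_nijenhuis hU hC) hA hf hg hX hY hx
    _ = g x ^ 4 • genTorsion A 2 X Y x := by
        rw [torsionStep_apply_eq_smul_add_torsionForm (T := genTorsion C 1) (T' := genTorsion A 1)
          (hA.differentiableAt hxU) hτC (hX.differentiableAt hxU) (hY.differentiableAt hxU),
          torsionForm_torsionCorrection, Pi.zero_apply, Pi.zero_apply, smul_zero, add_zero,
          smul_smul, ← pow_add]
        rfl
end
end

section
/- Let A be a smooth operator field on an open set U ⊆ ℝⁿ such that τ⁽ᵐ⁾_A(X,Y)(x) = 0 for all smooth vector fields X, Y and all x ∈ U, for some integer m ≥ 2. Then for any smooth functions c₀, …, c_N : U → ℝ, the operator field P(x) = Σ_{k=0}^{N} c_k(x) A(x)ᵏ also satisfies τ⁽ᵐ⁾_P(X,Y)(x) = 0 for all smooth vector fields X, Y and all x ∈ U. -/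
noncomputable section

/-!
For bilinear maps `b` write `L_q b = q ∘ b`, `R¹_q b = b(q·, ·)`, `R²_q b = b(·, q·)` and
`Φ_q = (L_q - R¹_q)(L_q - R²_q)` (`torsionStep q`), so that `τ⁽ᵐ⁺¹⁾_Q = Φ_Q τ⁽ᵐ⁾_Q`. The Nijenhuis
torsion is tensorial, with value `t(Q x, DQ x)` at `x` (`nijenhuisForm`), hence `τ⁽ᵐ⁺¹⁾_Q(V, W)(x)` is
`Φ_{Q x}^m t(Q x, DQ x)` evaluated at `(V x, W x)`.

At a point, let `a = A x` and `p = Σ c_k a^k`. The operators `L_a, R¹_a, R²_a` commute, so dividing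
`p(L_a) - p(R_a)` by `L_a - R_a` gives `Φ_p = U V Φ_a` with `U, V` commuting with everything in sight.
Differentiating `P = Σ c_k A^k` gives `t(p, DP) = U V t(a, DA)` plus terms coming from the derivatives
of the `c_k`; those are annihilated by a single `Φ_p` because `a^k` commutes with `p`. Hence for
`m ≥ 2`, `Φ_p^{m-1} t(p, DP) = (U V)^m Φ_a^{m-1} t(a, DA) = 0`.
-/

open Finset ContinuousLinearMap

section DivDiff

variable {R 𝒜 : Type*} [CommRing R] [Ring 𝒜] [Algebra R 𝒜]

/-- For commuting `x, y` this is `(f x - f y) / (x - y)` with `f = Σ_{k ∈ s} c k X^k`. -/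
def divDiff (c : ℕ → R) (s : Finset ℕ) (x y : 𝒜) : 𝒜 :=
  ∑ k ∈ s, c k • ∑ i ∈ range k, x ^ i * y ^ (k - 1 - i)

variable {c : ℕ → R} {s : Finset ℕ} {x y z x' y' : 𝒜}

theorem Commute.divDiff_mul_sub (h : Commute x y) :
    divDiff c s x y * (x - y) = ∑ k ∈ s, c k • x ^ k - ∑ k ∈ s, c k • y ^ k := by
  simp only [divDiff, sum_mul, smul_mul_assoc, h.geom_sum₂_mul, smul_sub, sum_sub_distrib]

theorem Commute.divDiff_right (hx : Commute z x) (hy : Commute z y) :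
    Commute z (divDiff c s x y) :=
  .sum_right _ _ _ fun k _ => .smul_right
    (.sum_right _ _ _ fun i _ => (hx.pow_right i).mul_right (hy.pow_right _)) (c k)

theorem SemiconjBy.divDiff_right (hx : SemiconjBy z x x') (hy : SemiconjBy z y y') :
    SemiconjBy z (divDiff c s x y) (divDiff c s x' y') := by
  simp only [divDiff, SemiconjBy, mul_sum, sum_mul, mul_smul_comm, smul_mul_assoc]
  exact sum_congr rfl fun k _ => congrArg _ <| sum_congr rfl fun i _ =>
    ((hx.pow_right i).mul_right (hy.pow_right _)).eq

section CommutingTriple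

variable (c : ℕ → R) (s : Finset ℕ) {ℓ r t σ : 𝒜}
  (hlr : Commute ℓ r) (hlt : Commute ℓ t) (hrt : Commute r t)
include hlr hlt hrt

theorem commute_sub_divDiff : Commute (ℓ - r) (divDiff c s ℓ t) :=
  .divDiff_right ((Commute.refl ℓ).sub_left hlr.symm) (hlt.sub_left hrt)

theorem commute_divDiff_divDiff : Commute (divDiff c s ℓ r) (divDiff c s ℓ t) :=
  .divDiff_right (Commute.divDiff_right (.refl ℓ) hlr).symm
    (Commute.divDiff_right hlt.symm hrt.symm).symm

theorem commute_divDiff_mul_divDiff :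
    Commute (divDiff c s ℓ r * divDiff c s ℓ t) ((ℓ - r) * (ℓ - t)) := by
  have hr : Commute (ℓ - r) (divDiff c s ℓ r) :=
    .divDiff_right ((Commute.refl ℓ).sub_left hlr.symm) (hlr.sub_left (.refl r))
  have ht : Commute (ℓ - t) (divDiff c s ℓ t) :=
    .divDiff_right ((Commute.refl ℓ).sub_left hlt.symm) (hlt.sub_left (.refl t))
  have htr : Commute (ℓ - t) (divDiff c s ℓ r) :=
    .divDiff_right ((Commute.refl ℓ).sub_left hlt.symm) (hlr.sub_left hrt.symm)
  exact ((hr.mul_right (commute_sub_divDiff c s hlr hlt hrt)).mul_left (htr.mul_right ht)).symm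

theorem poly_sub_mul_poly_sub :
    (∑ k ∈ s, c k • ℓ ^ k - ∑ k ∈ s, c k • r ^ k) * (∑ k ∈ s, c k • ℓ ^ k - ∑ k ∈ s, c k • t ^ k)
      = divDiff c s ℓ r * divDiff c s ℓ t * ((ℓ - r) * (ℓ - t)) := by
  rw [← hlr.divDiff_mul_sub, ← hlt.divDiff_mul_sub, mul_assoc, ← mul_assoc (ℓ - r),
    (commute_sub_divDiff c s hlr hlt hrt).eq]
  noncomm_ring

theorem poly_sub_mul_sub_poly_sub_mul_divDiff (hσl : SemiconjBy σ ℓ ℓ) (hσt : SemiconjBy σ t r) :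
    ((∑ k ∈ s, c k • ℓ ^ k - ∑ k ∈ s, c k • t ^ k) * σ
        - (∑ k ∈ s, c k • ℓ ^ k - ∑ k ∈ s, c k • r ^ k)) * divDiff c s ℓ t
      = divDiff c s ℓ r * divDiff c s ℓ t * ((ℓ - t) * σ - (ℓ - r)) := by
  have hσ : σ * divDiff c s ℓ t = divDiff c s ℓ r * σ := (hσl.divDiff_right hσt).eq
  have htr : Commute (ℓ - t) (divDiff c s ℓ r) :=
    .divDiff_right ((Commute.refl ℓ).sub_left hlt.symm) (hlr.sub_left hrt.symm)
  rw [← hlr.divDiff_mul_sub, ← hlt.divDiff_mul_sub, sub_mul, mul_assoc _ σ, hσ, ← mul_assoc,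
    mul_assoc (divDiff c s ℓ t) (ℓ - t), htr.eq, ← mul_assoc,
    ← (commute_divDiff_divDiff c s hlr hlt hrt).eq, mul_assoc (divDiff c s ℓ r) (ℓ - r),
    (commute_sub_divDiff c s hlr hlt hrt).eq]
  noncomm_ring

end CommutingTriple

end DivDiff

namespace BilinTorsion

variable {𝕜 E : Type*} [NontriviallyNormedField 𝕜] [NormedAddCommGroup E] [NormedSpace 𝕜 E]

def leftComp (q : E →L[𝕜] E) : Module.End 𝕜 (E →L[𝕜] E →L[𝕜] E) where
  toFun b := (compL 𝕜 E E E q).comp b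
  map_add' _ _ := by ext; simp
  map_smul' _ _ := by ext; simp

def rightCompFst (q : E →L[𝕜] E) : Module.End 𝕜 (E →L[𝕜] E →L[𝕜] E) where
  toFun b := b.comp q
  map_add' _ _ := by ext; simp
  map_smul' _ _ := by ext; simp

def rightCompSnd (q : E →L[𝕜] E) : Module.End 𝕜 (E →L[𝕜] E →L[𝕜] E) where
  toFun b := ((compL 𝕜 E E E).flip q).comp b
  map_add' _ _ := by ext; simp
  map_smul' _ _ := by ext; simp

def flipEnd : Module.End 𝕜 (E →L[𝕜] E →L[𝕜] E) :=
  (flipₗᵢ 𝕜 E E E).toLinearEquiv.toLinearMap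

def torsionStep (q : E →L[𝕜] E) : Module.End 𝕜 (E →L[𝕜] E →L[𝕜] E) :=
  (leftComp q - rightCompFst q) * (leftComp q - rightCompSnd q)

def nijenhuisForm (q : E →L[𝕜] E) : Module.End 𝕜 (E →L[𝕜] E →L[𝕜] E) :=
  (leftComp q - rightCompSnd q) * flipEnd - (leftComp q - rightCompFst q)

variable (q q' : E →L[𝕜] E) (b : E →L[𝕜] E →L[𝕜] E) (v w : E)

@[simp] theorem leftComp_apply : leftComp q b v w = q (b v w) := rfl

@[simp] theorem rightCompFst_apply : rightCompFst q b v w = b (q v) w := rfl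

@[simp] theorem rightCompSnd_apply : rightCompSnd q b v w = b v (q w) := rfl

@[simp] theorem flipEnd_apply : flipEnd b v w = b w v := rfl

@[simp] theorem torsionStep_apply :
    torsionStep q b v w = q (q (b v w)) + b (q v) (q w) - q (b v (q w) + b (q v) w) := by
  simp [torsionStep, map_add]
  abel

@[simp] theorem nijenhuisForm_apply :
    nijenhuisForm q b v w = b (q v) w - b (q w) v - q (b v w) + q (b w v) := by
  simp [nijenhuisForm]
  abel

theorem commute_leftComp_rightCompFst : Commute (leftComp q) (rightCompFst q') :=
  LinearMap.ext fun _ => rfl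

theorem commute_leftComp_rightCompSnd : Commute (leftComp q) (rightCompSnd q') :=
  LinearMap.ext fun _ => rfl

theorem commute_rightCompFst_rightCompSnd : Commute (rightCompFst q) (rightCompSnd q') :=
  LinearMap.ext fun _ => rfl

theorem flipEnd_semiconj_leftComp : SemiconjBy flipEnd (leftComp q) (leftComp q) :=
  LinearMap.ext fun _ => rfl

theorem flipEnd_semiconj_rightCompSnd : SemiconjBy flipEnd (rightCompSnd q) (rightCompFst q) :=
  LinearMap.ext fun _ => rfl

theorem commute_torsionStep_nijenhuisForm : Commute (torsionStep q) (nijenhuisForm q) := by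
  refine LinearMap.ext fun b => ?_
  ext v w
  simp [Module.End.mul_apply, map_add, map_sub]
  abel

theorem torsionStep_smulRight_eq_zero {C : E →L[𝕜] E} (γ : StrongDual 𝕜 E) (h : Commute q C) :
    torsionStep q (γ.smulRight C) = 0 := by
  ext v w
  have hqC : ∀ u, q (C u) = C (q u) := fun u => congr($(h.eq) u)
  simp [hqC]

theorem leftComp_mul : leftComp (q * q') = leftComp q * leftComp q' :=
  LinearMap.ext fun _ => rfl

theorem rightCompFst_mul : rightCompFst (q * q') = rightCompFst q' * rightCompFst q :=
  LinearMap.ext fun _ => rfl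

theorem rightCompSnd_mul : rightCompSnd (q * q') = rightCompSnd q' * rightCompSnd q :=
  LinearMap.ext fun _ => rfl

theorem leftComp_pow (k : ℕ) : leftComp (q ^ k) = leftComp q ^ k := by
  induction k with
  | zero => exact LinearMap.ext fun _ => rfl
  | succ k ih => rw [pow_succ, pow_succ, leftComp_mul, ih]

theorem rightCompFst_pow (k : ℕ) : rightCompFst (q ^ k) = rightCompFst q ^ k := by
  induction k with
  | zero => exact LinearMap.ext fun _ => rfl
  | succ k ih => rw [pow_succ, pow_succ', rightCompFst_mul, ih]

theorem rightCompSnd_pow (k : ℕ) : rightCompSnd (q ^ k) = rightCompSnd q ^ k := by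
  induction k with
  | zero => exact LinearMap.ext fun _ => rfl
  | succ k ih => rw [pow_succ, pow_succ', rightCompSnd_mul, ih]

section Polynomial

variable (a : E →L[𝕜] E) (c : ℕ → 𝕜) (s : Finset ℕ)

theorem leftComp_poly : leftComp (∑ k ∈ s, c k • a ^ k) = ∑ k ∈ s, c k • leftComp a ^ k := by
  ext b v w
  simp [← leftComp_pow]

theorem rightCompFst_poly :
    rightCompFst (∑ k ∈ s, c k • a ^ k) = ∑ k ∈ s, c k • rightCompFst a ^ k := by
  ext b v w
  simp [← rightCompFst_pow]

theorem rightCompSnd_poly :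
    rightCompSnd (∑ k ∈ s, c k • a ^ k) = ∑ k ∈ s, c k • rightCompSnd a ^ k := by
  ext b v w
  simp [← rightCompSnd_pow]

theorem torsionStep_poly :
    torsionStep (∑ k ∈ s, c k • a ^ k)
      = divDiff c s (leftComp a) (rightCompFst a) * divDiff c s (leftComp a) (rightCompSnd a)
        * torsionStep a := by
  rw [torsionStep, torsionStep, leftComp_poly, rightCompFst_poly, rightCompSnd_poly]
  exact poly_sub_mul_poly_sub (𝒜 := Module.End 𝕜 (E →L[𝕜] E →L[𝕜] E)) c s
    (commute_leftComp_rightCompFst a a) (commute_leftComp_rightCompSnd a a)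
    (commute_rightCompFst_rightCompSnd a a)

theorem nijenhuisForm_poly_mul_divDiff :
    nijenhuisForm (∑ k ∈ s, c k • a ^ k) * divDiff c s (leftComp a) (rightCompSnd a)
      = divDiff c s (leftComp a) (rightCompFst a) * divDiff c s (leftComp a) (rightCompSnd a)
        * nijenhuisForm a := by
  rw [nijenhuisForm, nijenhuisForm, leftComp_poly, rightCompFst_poly, rightCompSnd_poly]
  exact poly_sub_mul_sub_poly_sub_mul_divDiff (𝒜 := Module.End 𝕜 (E →L[𝕜] E →L[𝕜] E)) c s
    (commute_leftComp_rightCompFst a a) (commute_leftComp_rightCompSnd a a)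
    (commute_rightCompFst_rightCompSnd a a)
    (flipEnd_semiconj_leftComp a) (flipEnd_semiconj_rightCompSnd a)

theorem torsionStep_pow_nijenhuisForm_poly (d : E →L[𝕜] E →L[𝕜] E) (γ : ℕ → StrongDual 𝕜 E)
    (j : ℕ) (h : (torsionStep a ^ (j + 1)) (nijenhuisForm a d) = 0) :
    (torsionStep (∑ k ∈ s, c k • a ^ k) ^ (j + 1))
      (nijenhuisForm (∑ k ∈ s, c k • a ^ k)
        (divDiff c s (leftComp a) (rightCompSnd a) d + ∑ k ∈ s, (γ k).smulRight (a ^ k))) = 0 := by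
  set p := ∑ k ∈ s, c k • a ^ k
  set V := divDiff c s (leftComp a) (rightCompSnd a)
  set W := divDiff c s (leftComp a) (rightCompFst a) * V
  have hW : Commute W (torsionStep a) :=
    commute_divDiff_mul_divDiff (𝒜 := Module.End 𝕜 (E →L[𝕜] E →L[𝕜] E)) c s
      (commute_leftComp_rightCompFst a a) (commute_leftComp_rightCompSnd a a)
      (commute_rightCompFst_rightCompSnd a a)
  have hpoly : (torsionStep p ^ (j + 1)) (nijenhuisForm p (V d)) = 0 :=
    calc _ = (torsionStep p ^ (j + 1) * (nijenhuisForm p * V)) d := rfl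
      _ = (W ^ (j + 1) * W * torsionStep a ^ (j + 1)) (nijenhuisForm a d) := by
        rw [torsionStep_poly, nijenhuisForm_poly_mul_divDiff, hW.mul_pow, mul_assoc,
          ← mul_assoc (torsionStep a ^ (j + 1)), ← (hW.pow_right (j + 1)).eq]
        simp only [mul_assoc, Module.End.mul_apply]
      _ = 0 := by rw [Module.End.mul_apply, h, map_zero]
  have hcoeff (k : ℕ) : (torsionStep p ^ (j + 1)) (nijenhuisForm p ((γ k).smulRight (a ^ k))) = 0 := by
    have hpa : Commute p (a ^ k) :=
      .sum_left _ _ _ fun i _ => (Commute.pow_pow_self a i k).smul_left (c i)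
    rw [pow_succ, Module.End.mul_apply, ← Module.End.mul_apply (torsionStep p),
      (commute_torsionStep_nijenhuisForm p).eq, Module.End.mul_apply,
      torsionStep_smulRight_eq_zero _ _ hpa, map_zero, map_zero]
  rw [map_add, map_sum, map_add, map_sum, hpoly, sum_eq_zero fun k _ => hcoeff k, add_zero]

end Polynomial

theorem hasFDerivAt_sum_smul_pow {f : E → E →L[𝕜] E} {c : ℕ → E → 𝕜} {x : E} (s : Finset ℕ)
    (hf : DifferentiableAt 𝕜 f x) (hc : ∀ k, DifferentiableAt 𝕜 (c k) x) :
    HasFDerivAt (fun y => ∑ k ∈ s, c k y • f y ^ k)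
      (divDiff (fun k => c k x) s (leftComp (f x)) (rightCompSnd (f x)) (fderiv 𝕜 f x)
        + ∑ k ∈ s, (fderiv 𝕜 (c k) x).smulRight (f x ^ k)) x := by
  have hpow (k : ℕ) : HasFDerivAt (fun y => f y ^ k)
      ((∑ i ∈ range k, leftComp (f x) ^ i * rightCompSnd (f x) ^ (k - 1 - i)) (fderiv 𝕜 f x)) x := by
    refine (hf.hasFDerivAt.fun_pow' k).congr_fderiv ?_
    ext h v
    rw [← sum_range_reflect]
    simp [← leftComp_pow, ← rightCompSnd_pow]
    refine sum_congr rfl fun i hi => ?_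
    rw [Nat.sub_sub_self (by grind)]
  refine (HasFDerivAt.fun_sum fun k _ => (hc k).hasFDerivAt.smul (hpow k)).congr_fderiv ?_
  simp [divDiff, sum_add_distrib]

end BilinTorsion

open BilinTorsion

theorem genTorsion_one_apply {n : ℕ} {Q : OpField n} {V W : VF n} {x : Vec n}
    (hQ : DifferentiableAt ℝ Q x) (hV : DifferentiableAt ℝ V x) (hW : DifferentiableAt ℝ W x) :
    genTorsion Q 1 V W x = nijenhuisForm (Q x) (fderiv ℝ Q x) (V x) (W x) := by
  have hQV : fderiv ℝ (opApp Q V) x = (Q x).comp (fderiv ℝ V x) + (fderiv ℝ Q x).flip (V x) :=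
    fderiv_clm_apply hQ hV
  have hQW : fderiv ℝ (opApp Q W) x = (Q x).comp (fderiv ℝ W x) + (fderiv ℝ Q x).flip (W x) :=
    fderiv_clm_apply hQ hW
  simp only [genTorsion, lieBracket, hQV, hQW]
  simp [opApp, map_sub, map_add]
  abel

theorem genTorsion_succ_apply {n : ℕ} {U : Set (Vec n)} (hU : IsOpen U) {Q : OpField n}
    (hQ : ContDiffOn ℝ (⊤ : ℕ∞) Q U) (m : ℕ) {V W : VF n} (hV : ContDiffOn ℝ (⊤ : ℕ∞) V U)
    (hW : ContDiffOn ℝ (⊤ : ℕ∞) W U) {x : Vec n} (hx : x ∈ U) :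
    genTorsion Q (m + 1) V W x
      = (torsionStep (Q x) ^ m) (nijenhuisForm (Q x) (fderiv ℝ Q x)) (V x) (W x) := by
  induction m generalizing V W with
  | zero =>
    have hdiff {F : Type} [NormedAddCommGroup F] [NormedSpace ℝ F] {g : Vec n → F}
        (hg : ContDiffOn ℝ (⊤ : ℕ∞) g U) : DifferentiableAt ℝ g x :=
      (hg.contDiffAt (hU.mem_nhds hx)).differentiableAt (by simp)
    exact genTorsion_one_apply (hdiff hQ) (hdiff hV) (hdiff hW)
  | succ m ih =>
    have hQV := hQ.clm_apply hV
    have hQW := hQ.clm_apply hW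
    rw [pow_succ', Module.End.mul_apply, torsionStep_apply, ← ih hV hW, ← ih hQV hQW,
      ← ih hV hQW, ← ih hQV hW]
    rfl

/-- if τ⁽ᵐ⁾_A ≡ 0 on U for some m ≥ 2, then every polynomial
P(x) = Σ_{k=0}^{N} c_k(x)·A(x)ᵏ with smooth coefficients also has τ⁽ᵐ⁾_P ≡ 0 on U. -/
theorem genTorsion_poly_vanishing {n : ℕ} (U : Set (Vec n)) (hU : IsOpen U)
    (A : OpField n) (hA : ContDiffOn ℝ (⊤ : ℕ∞) A U)
    (m : ℕ) (hm : 2 ≤ m)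
    (hvan : ∀ X Y : VF n, ContDiffOn ℝ (⊤ : ℕ∞) X U → ContDiffOn ℝ (⊤ : ℕ∞) Y U →
      ∀ x ∈ U, genTorsion A m X Y x = 0)
    (N : ℕ) (c : ℕ → Vec n → ℝ) (hc : ∀ k, ContDiffOn ℝ (⊤ : ℕ∞) (c k) U)
    (P : OpField n) (hP : ∀ x ∈ U, P x = ∑ k ∈ Finset.range (N + 1), c k x • A x ^ k) :
    ∀ X Y : VF n, ContDiffOn ℝ (⊤ : ℕ∞) X U → ContDiffOn ℝ (⊤ : ℕ∞) Y U →
      ∀ x ∈ U, genTorsion P m X Y x = 0 := by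
  intro X Y hX hY x hx
  obtain ⟨j, rfl⟩ : ∃ j, m = j + 2 := ⟨m - 2, by omega⟩
  have hP_smooth : ContDiffOn ℝ (⊤ : ℕ∞) P U :=
    (ContDiffOn.sum fun k _ => (hc k).smul (hA.pow k)).congr hP
  have hP_deriv := hasFDerivAt_sum_smul_pow (range (N + 1))
    ((hA.contDiffAt (hU.mem_nhds hx)).differentiableAt (by simp))
    (fun k => ((hc k).contDiffAt (hU.mem_nhds hx)).differentiableAt (by simp))
  have hA_vanish : (torsionStep (A x) ^ (j + 1)) (nijenhuisForm (A x) (fderiv ℝ A x)) = 0 := by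
    refine ContinuousLinearMap.ext fun v => ContinuousLinearMap.ext fun w => ?_
    have := hvan (fun _ => v) (fun _ => w) contDiffOn_const contDiffOn_const x hx
    rwa [genTorsion_succ_apply hU hA (j + 1) contDiffOn_const contDiffOn_const hx] at this
  rw [genTorsion_succ_apply hU hP_smooth (j + 1) hX hY hx,
    (hP_deriv.congr_of_eventuallyEq (Filter.eventually_of_mem (hU.mem_nhds hx) hP)).fderiv,
    hP x hx, torsionStep_pow_nijenhuisForm_poly _ _ _ _ _ _ hA_vanish]
  rfl
end
end

section
/- Let A be a smooth operator field on an open set U ⊆ ℝⁿ satisfying the spectral regularity assumption, with generalized eigen-distributions D₁, …, D_s, and suppose that τ⁽ᵐ⁾_A(X,Y)(x) = 0 for all smooth vector fields X, Y and all x ∈ U, for some integer m ≥ 1. Then for every nonempty subset S ⊆ {1, …, s}, the distribution x ↦ ⊕_{i∈S} D_i(x) is involutive. In particular each generalized eigen-distribution D_i is involutive. -/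
/-!
Fix `S` and call a vector at `x` `S`-primary if some power of `∏_{i ∈ S} (A x - λᵢ x)` kills it.
If `V` and `W` are killed by `∏_{i ∈ L} (A - λᵢ)` and `∏_{i ∈ L'} (A - λᵢ)` for lists `L`, `L'`
of indices in `S`, then `τ⁽ʲ⁾(V, W)` is pointwise `S`-primary for every `j ≤ m`: for `j = m` it
vanishes, and `j + 1` gives `j` through the identity
`τ⁽ʲ⁺¹⁾(V,W) ≡ (A-λᵢ)(A-λₖ)τ⁽ʲ⁾(V,W) + τ⁽ʲ⁾((A-λᵢ)V,(A-λₖ)W) - (A-λₖ)τ⁽ʲ⁾((A-λᵢ)V,W)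
  - (A-λᵢ)τ⁽ʲ⁾(V,(A-λₖ)W)`,
which holds modulo vectors killed by every polynomial in `A x` killing `V x` and `W x`, because
up to such vectors `τ⁽ʲ⁾` is bilinear over smooth functions. The shifted fields have shorter lists,
so an induction on the two lists goes through. At `j = 0` this says that `[V, W]` is `S`-primary,
and since the `λᵢ` are distinct and `ker (A - λᵢ)^ρᵢ = ker (A - λᵢ)^(ρᵢ+1)`, the `S`-primary
vectors lie in `⨁_{i ∈ S} Dᵢ`.
-/

noncomputable section

/-- The generalized eigen-distribution `ker ((A(x) − λ(x)·Id)^ρ)`. -/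
noncomputable def eigenDist {n : ℕ} (A : OpField n) (lam : Vec n → ℝ) (ρ : ℕ)
    (x : Vec n) : Submodule ℝ (Vec n) :=
  LinearMap.ker (((A x - lam x • 1) ^ ρ : Vec n →L[ℝ] Vec n) : Vec n →ₗ[ℝ] Vec n)

/-- Spectral regularity of an operator field `A` on `U`: smooth pointwise-distinct
eigenvalue functions `lam i`, Riesz indices `ρ i ≥ 1` with
`ker (A−λᵢ)^{ρᵢ} = ker (A−λᵢ)^{ρᵢ+1}`, the dimension of each generalized
eigen-distribution constantly `r i`, and ℝⁿ the internal direct sum of them. -/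
structure SpectralRegular {n : ℕ} (U : Set (Vec n)) (A : OpField n)
    (s : ℕ) (lam : Fin s → Vec n → ℝ) (ρ : Fin s → ℕ) (r : Fin s → ℕ) : Prop where
  smooth_lam : ∀ i, ContDiffOn ℝ (⊤ : ℕ∞) (lam i) U
  distinct : ∀ i j, i ≠ j → ∀ x ∈ U, lam i x ≠ lam j x
  rho_pos : ∀ i, 1 ≤ ρ i
  riesz : ∀ i, ∀ x ∈ U, eigenDist A (lam i) (ρ i) x = eigenDist A (lam i) (ρ i + 1) x
  rank_const : ∀ i, ∀ x ∈ U, Module.finrank ℝ (eigenDist A (lam i) (ρ i) x) = r i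
  direct : ∀ x ∈ U, DirectSum.IsInternal (fun i => eigenDist A (lam i) (ρ i) x)

/-- A distribution `x ↦ 𝒟(x) ⊆ ℝⁿ` is involutive on `U` if the Lie bracket of any two
smooth vector fields taking values in it again takes values in it. -/
def Involutive {n : ℕ} (U : Set (Vec n)) (D : Vec n → Submodule ℝ (Vec n)) : Prop :=
  ∀ V W : VF n, ContDiffOn ℝ (⊤ : ℕ∞) V U → ContDiffOn ℝ (⊤ : ℕ∞) W U →
    (∀ x ∈ U, V x ∈ D x) → (∀ x ∈ U, W x ∈ D x) →
    ∀ x ∈ U, lieBracket V W x ∈ D x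

open scoped ContDiff
open Polynomial Module.End Set

section PolynomialKernels

variable {R M : Type*} [CommRing R] [AddCommGroup M] [Module R M]

theorem aeval_apply_self_apply (T : Module.End R M) (p : R[X]) (v : M) :
    aeval T p (T v) = T (aeval T p v) := by
  have h := ((Commute.all p X).map (aeval T)).eq
  rw [aeval_X] at h
  exact congrArg (· v) h

theorem mem_maxGenEigenspace_aeval_zero {T : Module.End R M} {q : R[X]} {v : M} :
    v ∈ (aeval T q).maxGenEigenspace 0 ↔ ∃ N : ℕ, aeval T (q ^ N) v = 0 := by
  simp [mem_maxGenEigenspace, map_pow]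

theorem aeval_apply_mem_maxGenEigenspace_aeval {T : Module.End R M} {q : R[X]} (p : R[X])
    {v : M} (hv : v ∈ (aeval T q).maxGenEigenspace 0) :
    aeval T p v ∈ (aeval T q).maxGenEigenspace 0 :=
  mapsTo_maxGenEigenspace_of_comm ((Commute.all q p).map (aeval T)) 0 hv

theorem mem_maxGenEigenspace_aeval_of_dvd {T : Module.End R M} {p q : R[X]} {N : ℕ}
    (hpq : p ∣ q ^ N) {v : M} (hv : aeval T p v ∈ (aeval T q).maxGenEigenspace 0) :
    v ∈ (aeval T q).maxGenEigenspace 0 := by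
  obtain ⟨k, hk⟩ := mem_maxGenEigenspace_aeval_zero.1 hv
  obtain ⟨r, hr⟩ := hpq
  refine mem_maxGenEigenspace_aeval_zero.2 ⟨k + N, ?_⟩
  have hsplit : q ^ (k + N) = r * q ^ k * p := by rw [pow_add, hr]; ring
  rw [hsplit, aeval_mul, aeval_mul, mul_apply, mul_apply, hk, map_zero]

theorem ker_aeval_le_ker_aeval_of_dvd (T : Module.End R M) {p q : R[X]} (h : p ∣ q) :
    LinearMap.ker (aeval T p) ≤ LinearMap.ker (aeval T q) := by
  obtain ⟨r, rfl⟩ := h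
  rw [mul_comm, aeval_mul]
  exact LinearMap.ker_le_ker_comp _ _

theorem ker_aeval_prod_eq_iSup {ι : Type*} (T : Module.End R M) (S : Finset ι) (p : ι → R[X])
    (hp : (S : Set ι).Pairwise (Function.onFun IsCoprime p)) :
    LinearMap.ker (aeval T (∏ i ∈ S, p i)) = ⨆ i ∈ S, LinearMap.ker (aeval T (p i)) := by
  classical
  induction S using Finset.induction_on with
  | empty => simp [Module.End.one_eq_id]
  | insert a S ha ih =>
    rw [Finset.coe_insert, Set.pairwise_insert] at hp
    rw [Finset.prod_insert ha, ← sup_ker_aeval_eq_ker_aeval_mul_of_coprime T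
      (IsCoprime.prod_right fun i hi => (hp.2 i hi (ne_of_mem_of_not_mem hi ha).symm).1),
      ih hp.1, Finset.iSup_insert]

end PolynomialKernels

theorem Module.End.ker_pow_le_of_ker_pow_eq_succ {K V : Type*} [DivisionRing K] [AddCommGroup V]
    [Module K V] {f : Module.End K V} {k : ℕ}
    (h : LinearMap.ker (f ^ k) = LinearMap.ker (f ^ (k + 1))) (N : ℕ) :
    LinearMap.ker (f ^ N) ≤ LinearMap.ker (f ^ k) :=
  calc LinearMap.ker (f ^ N) ≤ LinearMap.ker (f ^ k * f ^ N) := LinearMap.ker_le_ker_comp _ _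
    _ = LinearMap.ker (f ^ k) := by rw [← pow_add, ← ker_pow_constant h N]

theorem ContDiffOn.differentiableAt_of_isOpen {𝕜 E F : Type*} [NontriviallyNormedField 𝕜]
    [NormedAddCommGroup E] [NormedSpace 𝕜 E] [NormedAddCommGroup F] [NormedSpace 𝕜 F]
    {f : E → F} {s : Set E} {x : E} {k : WithTop ℕ∞} (hf : ContDiffOn 𝕜 k f s) (hk : k ≠ 0)
    (hs : IsOpen s) (hx : x ∈ s) : DifferentiableAt 𝕜 f x :=
  (hf.contDiffAt (hs.mem_nhds hx)).differentiableAt hk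

section GenTorsion

variable {n : ℕ} {U : Set (Vec n)}

theorem genTorsion_swap (A : OpField n) (j : ℕ) (V W : VF n) (x : Vec n) :
    genTorsion A j W V x = -genTorsion A j V W x := by
  induction j generalizing V W with
  | zero => exact (neg_sub _ _).symm
  | succ j ih =>
    simp only [genTorsion]
    rw [ih V W, ih (opApp A V) (opApp A W), ih V (opApp A W), ih (opApp A V) W]
    simp only [map_neg, map_add]
    abel

variable {A : OpField n}

theorem contDiffOn_opApp (hA : ContDiffOn ℝ ∞ A U) {Z : VF n} (hZ : ContDiffOn ℝ ∞ Z U) :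
    ContDiffOn ℝ ∞ (opApp A Z) U :=
  hA.clm_apply hZ

theorem contDiffOn_shift (hA : ContDiffOn ℝ ∞ A U) {f : Vec n → ℝ} (hf : ContDiffOn ℝ ∞ f U) :
    ContDiffOn ℝ ∞ (A - f • 1) U :=
  hA.sub (hf.smul contDiffOn_const)

theorem genTorsion_eq_zero_of_eqOn_zero_left (hU : IsOpen U) (j : ℕ) {V : VF n}
    (hV : EqOn V 0 U) (W : VF n) {x : Vec n} (hx : x ∈ U) : genTorsion A j V W x = 0 := by
  induction j generalizing V W with
  | zero =>
    have hDV : fderiv ℝ V x = 0 :=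
      (Filter.eventuallyEq_of_mem (hU.mem_nhds hx) hV).fderiv_eq.trans (fderiv_const_apply 0)
    simp [genTorsion, lieBracket, hV hx, hDV]
  | succ j ih =>
    have hAV : EqOn (opApp A V) 0 U := fun y hy => by simp [opApp, hV hy]
    simp [genTorsion, ih hV, ih hAV]

theorem genTorsion_eq_zero_of_eqOn_zero_right (hU : IsOpen U) (j : ℕ) (V : VF n) {W : VF n}
    (hW : EqOn W 0 U) {x : Vec n} (hx : x ∈ U) : genTorsion A j V W x = 0 := by
  rw [← neg_neg (genTorsion A j V W x), ← genTorsion_swap,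
    genTorsion_eq_zero_of_eqOn_zero_left hU j hW V hx, neg_zero]

theorem genTorsion_add_left (hU : IsOpen U) (hA : ContDiffOn ℝ ∞ A U) (j : ℕ) {X X' Y : VF n}
    (hX : ContDiffOn ℝ ∞ X U) (hX' : ContDiffOn ℝ ∞ X' U) (hY : ContDiffOn ℝ ∞ Y U) {x : Vec n}
    (hx : x ∈ U) :
    genTorsion A j (X + X') Y x = genTorsion A j X Y x + genTorsion A j X' Y x := by
  induction j generalizing X X' Y with
  | zero =>
    simp only [genTorsion, lieBracket]
    rw [fderiv_add (hX.differentiableAt_of_isOpen (by simp) hU hx)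
      (hX'.differentiableAt_of_isOpen (by simp) hU hx)]
    simp only [Pi.add_apply, map_add, FunLike.coe_add]
    abel
  | succ j ih =>
    have hAX : opApp A (X + X') = opApp A X + opApp A X' := by funext y; simp [opApp]
    simp only [genTorsion, hAX]
    have hAX := contDiffOn_opApp hA hX
    have hAX' := contDiffOn_opApp hA hX'
    have hAY := contDiffOn_opApp hA hY
    rw [ih hX hX' hY, ih hAX hAX' hAY, ih hX hX' hAY, ih hAX hAX' hY]
    simp only [map_add]
    abel

theorem genTorsion_add_right (hU : IsOpen U) (hA : ContDiffOn ℝ ∞ A U) (j : ℕ) {X Y Y' : VF n}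
    (hX : ContDiffOn ℝ ∞ X U) (hY : ContDiffOn ℝ ∞ Y U) (hY' : ContDiffOn ℝ ∞ Y' U) {x : Vec n}
    (hx : x ∈ U) :
    genTorsion A j X (Y + Y') x = genTorsion A j X Y x + genTorsion A j X Y' x := by
  rw [genTorsion_swap A j (Y + Y'), genTorsion_add_left hU hA j hY hY' hX hx,
    genTorsion_swap A j X Y, genTorsion_swap A j X Y', neg_add, neg_neg, neg_neg]

theorem aeval_genTorsion_smul_left (hU : IsOpen U) (hA : ContDiffOn ℝ ∞ A U) (j : ℕ)
    {f : Vec n → ℝ} {X Y : VF n} (hf : ContDiffOn ℝ ∞ f U) (hX : ContDiffOn ℝ ∞ X U)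
    (hY : ContDiffOn ℝ ∞ Y U) {x : Vec n} (hx : x ∈ U) {p : ℝ[X]}
    (hpX : aeval (A x : Module.End ℝ (Vec n)) p (X x) = 0)
    (hpY : aeval (A x : Module.End ℝ (Vec n)) p (Y x) = 0) :
    aeval (A x : Module.End ℝ (Vec n)) p (genTorsion A j (f • X) Y x)
      = f x • aeval (A x : Module.End ℝ (Vec n)) p (genTorsion A j X Y x) := by
  induction j generalizing X Y with
  | zero =>
    simp only [genTorsion, lieBracket]
    rw [fderiv_smul (hf.differentiableAt_of_isOpen (by simp) hU hx)
      (hX.differentiableAt_of_isOpen (by simp) hU hx)]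
    simp only [Pi.smul_apply', map_smul, map_sub, map_add, FunLike.coe_add,
      FunLike.coe_smul, Pi.add_apply, Pi.smul_apply,
      ContinuousLinearMap.smulRight_apply, hpX, smul_zero, add_zero, smul_sub]
  | succ j ih =>
    have hA_apply : ∀ v, aeval (A x : Module.End ℝ (Vec n)) p (A x v)
        = A x (aeval (A x : Module.End ℝ (Vec n)) p v) :=
      aeval_apply_self_apply (A x : Module.End ℝ (Vec n)) p
    have hpAX : aeval (A x : Module.End ℝ (Vec n)) p (opApp A X x) = 0 := by
      simp only [opApp, hA_apply, hpX, map_zero]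
    have hpAY : aeval (A x : Module.End ℝ (Vec n)) p (opApp A Y x) = 0 := by
      simp only [opApp, hA_apply, hpY, map_zero]
    have hAfX : opApp A (f • X) = f • opApp A X := by funext y; simp [opApp]
    have hAX := contDiffOn_opApp hA hX
    have hAY := contDiffOn_opApp hA hY
    simp only [genTorsion, hAfX, map_add, map_sub, hA_apply, ih hX hY hpX hpY,
      ih hAX hAY hpAX hpAY, ih hX hAY hpX hpAY, ih hAX hY hpAX hpY, map_smul, smul_add, smul_sub]

theorem aeval_genTorsion_smul_right (hU : IsOpen U) (hA : ContDiffOn ℝ ∞ A U) (j : ℕ)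
    {g : Vec n → ℝ} {X Y : VF n} (hg : ContDiffOn ℝ ∞ g U) (hX : ContDiffOn ℝ ∞ X U)
    (hY : ContDiffOn ℝ ∞ Y U) {x : Vec n} (hx : x ∈ U) {p : ℝ[X]}
    (hpX : aeval (A x : Module.End ℝ (Vec n)) p (X x) = 0)
    (hpY : aeval (A x : Module.End ℝ (Vec n)) p (Y x) = 0) :
    aeval (A x : Module.End ℝ (Vec n)) p (genTorsion A j X (g • Y) x)
      = g x • aeval (A x : Module.End ℝ (Vec n)) p (genTorsion A j X Y x) := by
  rw [genTorsion_swap A j (g • Y), map_neg,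
    aeval_genTorsion_smul_left hU hA j hg hY hX hx hpY hpX, genTorsion_swap A j X Y, map_neg,
    smul_neg, neg_neg]

-- Write `A X = (A - f) X + f X`, `A Y = (A - g) Y + g Y` and expand: after applying `p(A x)`,
-- `τ⁽ʲ⁾` is bilinear over functions.
theorem aeval_genTorsion_succ (hU : IsOpen U) (hA : ContDiffOn ℝ ∞ A U) (j : ℕ)
    {f g : Vec n → ℝ} {X Y : VF n} (hf : ContDiffOn ℝ ∞ f U) (hg : ContDiffOn ℝ ∞ g U)
    (hX : ContDiffOn ℝ ∞ X U) (hY : ContDiffOn ℝ ∞ Y U) {x : Vec n} (hx : x ∈ U) {p : ℝ[X]}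
    (hpX : aeval (A x : Module.End ℝ (Vec n)) p (X x) = 0)
    (hpY : aeval (A x : Module.End ℝ (Vec n)) p (Y x) = 0) :
    aeval (A x : Module.End ℝ (Vec n)) p (genTorsion A (j + 1) X Y x)
      = aeval (A x : Module.End ℝ (Vec n)) p
          ((A - f • 1) x ((A - g • 1) x (genTorsion A j X Y x))
            + genTorsion A j (opApp (A - f • 1) X) (opApp (A - g • 1) Y) x
            - (A - g • 1) x (genTorsion A j (opApp (A - f • 1) X) Y x)
            - (A - f • 1) x (genTorsion A j X (opApp (A - g • 1) Y) x)) := by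
  have hPA : ∀ v, aeval (A x : Module.End ℝ (Vec n)) p (A x v)
      = A x (aeval (A x : Module.End ℝ (Vec n)) p v) :=
    aeval_apply_self_apply (A x : Module.End ℝ (Vec n)) p
  have hsplitX : opApp A X = opApp (A - f • 1) X + f • X := by funext y; simp [opApp]
  have hsplitY : opApp A Y = opApp (A - g • 1) Y + g • Y := by funext y; simp [opApp]
  have hpEX : aeval (A x : Module.End ℝ (Vec n)) p (opApp (A - f • 1) X x) = 0 := by
    simp [opApp, hPA, hpX]
  have hpEY : aeval (A x : Module.End ℝ (Vec n)) p (opApp (A - g • 1) Y x) = 0 := by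
    simp [opApp, hPA, hpY]
  have hpgY : aeval (A x : Module.End ℝ (Vec n)) p ((g • Y) x) = 0 := by simp [hpY]
  have hEX := contDiffOn_opApp (contDiffOn_shift hA hf) hX
  have hEY := contDiffOn_opApp (contDiffOn_shift hA hg) hY
  have hAY : ContDiffOn ℝ ∞ (opApp (A - g • 1) Y + g • Y) U := hEY.add (hg.smul hY)
  simp only [genTorsion]
  rw [hsplitX, hsplitY, genTorsion_add_left hU hA j hEX (hf.smul hX) hAY hx,
    genTorsion_add_right hU hA j hEX hEY (hg.smul hY) hx,
    genTorsion_add_right hU hA j (hf.smul hX) hEY (hg.smul hY) hx,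
    genTorsion_add_right hU hA j hX hEY (hg.smul hY) hx,
    genTorsion_add_left hU hA j hEX (hf.smul hX) hY hx]
  simp only [map_add, map_sub, hPA, Pi.sub_apply, Pi.smul_apply', Pi.one_apply,
    sub_apply, smul_apply, one_apply_eq_self, map_smul,
    aeval_genTorsion_smul_right hU hA j hg hEX hY hx hpEX hpY,
    aeval_genTorsion_smul_left hU hA j hf hX hEY hx hpX hpEY,
    aeval_genTorsion_smul_left hU hA j hf hX (hg.smul hY) hx hpX hpgY,
    aeval_genTorsion_smul_right hU hA j hg hX hY hx hpX hpY,
    aeval_genTorsion_smul_left hU hA j hf hX hY hx hpX hpY]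
  module

end GenTorsion

section Annihilation

variable {n : ℕ} {ι : Type*} (A : OpField n) (lam : ι → Vec n → ℝ)

noncomputable def linProd (L : List ι) (x : Vec n) : ℝ[X] :=
  (L.map fun i => X - C (lam i x)).prod

def KilledOn (L : List ι) (U : Set (Vec n)) (V : VF n) : Prop :=
  ∀ x ∈ U, aeval (A x : Module.End ℝ (Vec n)) (linProd lam L x) (V x) = 0

-- The sum of the generalized eigenspaces of `A x` for the eigenvalues `lam i x`, `i ∈ S`.
noncomputable def primaryPart (S : Finset ι) (x : Vec n) : Submodule ℝ (Vec n) :=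
  maxGenEigenspace (aeval (A x : Module.End ℝ (Vec n)) (∏ i ∈ S, (X - C (lam i x)))) 0

variable {A lam}

theorem linProd_append (L L' : List ι) (x : Vec n) :
    linProd lam (L ++ L') x = linProd lam L x * linProd lam L' x := by
  simp [linProd]

theorem shift_apply_eq_aeval (f : Vec n → ℝ) (x v : Vec n) :
    (A - f • 1) x v = aeval (A x : Module.End ℝ (Vec n)) (X - C (f x)) v := by
  simp [Algebra.algebraMap_eq_smul_one]

theorem linProd_dvd_pow {S : Finset ι} {L : List ι} (hL : ∀ i ∈ L, i ∈ S) (x : Vec n) :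
    linProd lam L x ∣ (∏ i ∈ S, (X - C (lam i x))) ^ L.length := by
  induction L with
  | nil => exact one_dvd _
  | cons i L ih =>
    rw [List.length_cons, pow_succ']
    exact mul_dvd_mul (Finset.dvd_prod_of_mem _ (hL i List.mem_cons_self))
      (ih fun k hk => hL k (List.mem_cons_of_mem i hk))

theorem eqOn_zero_of_killedOn_nil {U : Set (Vec n)} {V : VF n} (hV : KilledOn A lam [] U V) :
    EqOn V 0 U := fun x hx => by simpa [KilledOn, linProd] using hV x hx

theorem killedOn_shift_of_killedOn_cons {U : Set (Vec n)} {i : ι} {L : List ι} {V : VF n}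
    (hV : KilledOn A lam (i :: L) U V) : KilledOn A lam L U (opApp (A - lam i • 1) V) := by
  intro x hx
  have h := hV x hx
  rw [linProd, List.map_cons, List.prod_cons, mul_comm, aeval_mul, Module.End.mul_apply, ← linProd,
    ← shift_apply_eq_aeval] at h
  exact h

variable {U : Set (Vec n)} {S : Finset ι}

theorem aeval_linProd_append_eq_zero_left {L L' : List ι} {x : Vec n} {v : Vec n}
    (hv : aeval (A x : Module.End ℝ (Vec n)) (linProd lam L x) v = 0) :
    aeval (A x : Module.End ℝ (Vec n)) (linProd lam (L ++ L') x) v = 0 := by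
  rw [linProd_append, mul_comm, aeval_mul, Module.End.mul_apply, hv, map_zero]

theorem aeval_linProd_append_eq_zero_right {L L' : List ι} {x : Vec n} {v : Vec n}
    (hv : aeval (A x : Module.End ℝ (Vec n)) (linProd lam L' x) v = 0) :
    aeval (A x : Module.End ℝ (Vec n)) (linProd lam (L ++ L') x) v = 0 := by
  rw [linProd_append, aeval_mul, Module.End.mul_apply, hv, map_zero]

theorem genTorsion_mem_primaryPart_of_shifts (hU : IsOpen U) (hA : ContDiffOn ℝ ∞ A U)
    (hlam : ∀ i ∈ S, ContDiffOn ℝ ∞ (lam i) U) (j : ℕ) {i k : ι} {L L' : List ι}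
    (hL : ∀ l ∈ i :: L, l ∈ S) (hL' : ∀ l ∈ k :: L', l ∈ S) {V W : VF n}
    (hV : ContDiffOn ℝ ∞ V U) (hW : ContDiffOn ℝ ∞ W U) (hkV : KilledOn A lam (i :: L) U V)
    (hkW : KilledOn A lam (k :: L') U W) {x : Vec n} (hx : x ∈ U)
    (h₀ : genTorsion A (j + 1) V W x ∈ primaryPart A lam S x)
    (h₁ : genTorsion A j (opApp (A - lam i • 1) V) (opApp (A - lam k • 1) W) x
      ∈ primaryPart A lam S x)
    (h₂ : genTorsion A j (opApp (A - lam i • 1) V) W x ∈ primaryPart A lam S x)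
    (h₃ : genTorsion A j V (opApp (A - lam k • 1) W) x ∈ primaryPart A lam S x) :
    genTorsion A j V W x ∈ primaryPart A lam S x := by
  have hdec := aeval_genTorsion_succ hU hA j (hlam i (hL i List.mem_cons_self))
    (hlam k (hL' k List.mem_cons_self)) hV hW hx
    (aeval_linProd_append_eq_zero_left (hkV x hx)) (aeval_linProd_append_eq_zero_right (hkW x hx))
  have hfactor : linProd lam (i :: k :: (i :: L ++ k :: L')) x
      = linProd lam (i :: L ++ k :: L') x * (X - C (lam i x)) * (X - C (lam k x)) := by
    simp only [linProd, List.map_cons, List.prod_cons]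
    ring
  have hmem : ∀ l ∈ i :: k :: (i :: L ++ k :: L'), l ∈ S :=
    List.forall_mem_cons.2 ⟨hL i List.mem_cons_self,
      List.forall_mem_cons.2 ⟨hL' k List.mem_cons_self, List.forall_mem_append.2 ⟨hL, hL'⟩⟩⟩
  refine mem_maxGenEigenspace_aeval_of_dvd (linProd_dvd_pow hmem x) ?_
  rw [hfactor, aeval_mul, aeval_mul, Module.End.mul_apply, Module.End.mul_apply,
    ← shift_apply_eq_aeval, ← shift_apply_eq_aeval]
  have hshift : ∀ (l : ι) {v : Vec n}, v ∈ primaryPart A lam S x →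
      (A - lam l • 1) x v ∈ primaryPart A lam S x := fun l v hv => by
    rw [shift_apply_eq_aeval]; exact aeval_apply_mem_maxGenEigenspace_aeval _ hv
  have hsum :=
    hdec ▸ aeval_apply_mem_maxGenEigenspace_aeval (linProd lam (i :: L ++ k :: L') x) h₀
  rw [map_sub, map_sub, map_add,
    Submodule.sub_mem_iff_left _ (aeval_apply_mem_maxGenEigenspace_aeval _ (hshift i h₃)),
    Submodule.sub_mem_iff_left _ (aeval_apply_mem_maxGenEigenspace_aeval _ (hshift k h₂)),
    Submodule.add_mem_iff_left _ (aeval_apply_mem_maxGenEigenspace_aeval _ h₁)] at hsum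
  exact hsum

end Annihilation

section Descent

variable {n : ℕ} {ι : Type*} {U : Set (Vec n)} {A : OpField n} {lam : ι → Vec n → ℝ}
  {S : Finset ι}

def TorsionMapsToPrimary (A : OpField n) (lam : ι → Vec n → ℝ) (S : Finset ι) (U : Set (Vec n))
    (j : ℕ) : Prop :=
  ∀ (L L' : List ι) (V W : VF n), (∀ i ∈ L, i ∈ S) → (∀ i ∈ L', i ∈ S) →
    ContDiffOn ℝ ∞ V U → ContDiffOn ℝ ∞ W U → KilledOn A lam L U V → KilledOn A lam L' U W →
    ∀ x ∈ U, genTorsion A j V W x ∈ primaryPart A lam S x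

theorem torsionMapsToPrimary_of_vanishing {m : ℕ}
    (hvan : ∀ X Y : VF n, ContDiffOn ℝ ∞ X U → ContDiffOn ℝ ∞ Y U →
      ∀ x ∈ U, genTorsion A m X Y x = 0) :
    TorsionMapsToPrimary A lam S U m :=
  fun _ _ V W _ _ hV hW _ _ x hx => hvan V W hV hW x hx ▸ zero_mem _

theorem TorsionMapsToPrimary.of_succ (hU : IsOpen U) (hA : ContDiffOn ℝ ∞ A U)
    (hlam : ∀ i ∈ S, ContDiffOn ℝ ∞ (lam i) U) {j : ℕ}
    (h : TorsionMapsToPrimary A lam S U (j + 1)) : TorsionMapsToPrimary A lam S U j := by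
  intro L
  induction L with
  | nil =>
    intro L' V W _ _ _ _ hkV _ x hx
    rw [genTorsion_eq_zero_of_eqOn_zero_left hU j (eqOn_zero_of_killedOn_nil hkV) W hx]
    exact zero_mem _
  | cons i L ihL =>
    intro L'
    induction L' with
    | nil =>
      intro V W _ _ _ _ _ hkW x hx
      rw [genTorsion_eq_zero_of_eqOn_zero_right hU j V (eqOn_zero_of_killedOn_nil hkW) hx]
      exact zero_mem _
    | cons k L' ihL' =>
      intro V W hL hL' hV hW hkV hkW x hx
      have hLt := fun l hl => hL l (List.mem_cons_of_mem i hl)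
      have hLt' := fun l hl => hL' l (List.mem_cons_of_mem k hl)
      have hEV := contDiffOn_opApp (contDiffOn_shift hA (hlam i (hL i List.mem_cons_self))) hV
      have hFW := contDiffOn_opApp (contDiffOn_shift hA (hlam k (hL' k List.mem_cons_self))) hW
      exact genTorsion_mem_primaryPart_of_shifts hU hA hlam j hL hL' hV hW hkV hkW hx
        (h _ _ V W hL hL' hV hW hkV hkW x hx)
        (ihL L' _ _ hLt hLt' hEV hFW (killedOn_shift_of_killedOn_cons hkV)
          (killedOn_shift_of_killedOn_cons hkW) x hx)
        (ihL (k :: L') _ W hLt hL' hEV hW (killedOn_shift_of_killedOn_cons hkV) hkW x hx)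
        (ihL' V _ hL hLt' hV hFW hkV (killedOn_shift_of_killedOn_cons hkW) x hx)

theorem TorsionMapsToPrimary.zero (hU : IsOpen U) (hA : ContDiffOn ℝ ∞ A U)
    (hlam : ∀ i ∈ S, ContDiffOn ℝ ∞ (lam i) U) {m : ℕ} (h : TorsionMapsToPrimary A lam S U m) :
    TorsionMapsToPrimary A lam S U 0 := by
  induction m with
  | zero => exact h
  | succ m ih => exact ih (h.of_succ hU hA hlam)

end Descent

section Spectral

variable {n : ℕ} {ι : Type*}

theorem eigenDist_eq_ker_aeval (A : OpField n) (lam : Vec n → ℝ) (ρ : ℕ) (x : Vec n) :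
    eigenDist A lam ρ x
      = LinearMap.ker (aeval (A x : Module.End ℝ (Vec n)) ((X - C (lam x)) ^ ρ)) := by
  simp [eigenDist, Algebra.algebraMap_eq_smul_one]

theorem linProd_flatMap_replicate (lam : ι → Vec n → ℝ) (S : Finset ι) (ρ : ι → ℕ)
    (x : Vec n) :
    linProd lam (S.toList.flatMap fun i => List.replicate (ρ i) i) x
      = ∏ i ∈ S, (X - C (lam i x)) ^ ρ i := by
  simp [linProd, List.flatMap, List.map_flatten, List.prod_flatten, Finset.prod_map_toList]

theorem killedOn_of_mem_iSup_eigenDist {A : OpField n} {U : Set (Vec n)} {lam : ι → Vec n → ℝ}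
    {ρ : ι → ℕ} (S : Finset ι) {V : VF n}
    (hV : ∀ x ∈ U, V x ∈ ⨆ i ∈ S, eigenDist A (lam i) (ρ i) x) :
    KilledOn A lam (S.toList.flatMap fun i => List.replicate (ρ i) i) U V := by
  intro x hx
  rw [← LinearMap.mem_ker, linProd_flatMap_replicate]
  have hle : ⨆ i ∈ S, eigenDist A (lam i) (ρ i) x ≤ LinearMap.ker
      (aeval (A x : Module.End ℝ (Vec n)) (∏ i ∈ S, (X - C (lam i x)) ^ ρ i)) :=
    iSup₂_le fun i hi => eigenDist_eq_ker_aeval A (lam i) (ρ i) x ▸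
      ker_aeval_le_ker_aeval_of_dvd _ (Finset.dvd_prod_of_mem _ hi)
  exact hle (hV x hx)

theorem primaryPart_le_iSup_eigenDist {A : OpField n} {U : Set (Vec n)} {s : ℕ}
    {lam : Fin s → Vec n → ℝ} {ρ r : Fin s → ℕ} (hreg : SpectralRegular U A s lam ρ r) {x : Vec n}
    (hx : x ∈ U) (S : Finset (Fin s)) :
    primaryPart A lam S x ≤ ⨆ i ∈ S, eigenDist A (lam i) (ρ i) x := by
  intro v hv
  obtain ⟨N, hN⟩ := mem_maxGenEigenspace_aeval_zero.1 hv
  rw [← Finset.prod_pow, ← LinearMap.mem_ker, ker_aeval_prod_eq_iSup] at hN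
  · refine (iSup₂_mono fun i _ => ?_ : _ ≤ ⨆ i ∈ S, eigenDist A (lam i) (ρ i) x) hN
    have hriesz := hreg.riesz i x hx
    simp only [eigenDist_eq_ker_aeval, map_pow] at hriesz ⊢
    exact Module.End.ker_pow_le_of_ker_pow_eq_succ hriesz N
  · exact fun i _ k _ hik =>
      (isCoprime_X_sub_C_of_isUnit_sub (sub_ne_zero.2 (hreg.distinct i k hik x hx)).isUnit).pow

end Spectral

theorem eigenDist_sums_involutive_general {n : ℕ} (U : Set (Vec n)) (hU : IsOpen U)
    (A : OpField n) (hA : ContDiffOn ℝ (⊤ : ℕ∞) A U)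
    (s : ℕ) (lam : Fin s → Vec n → ℝ) (ρ r : Fin s → ℕ)
    (hreg : SpectralRegular U A s lam ρ r)
    (m : ℕ)
    (hvan : ∀ X Y : VF n, ContDiffOn ℝ (⊤ : ℕ∞) X U → ContDiffOn ℝ (⊤ : ℕ∞) Y U →
      ∀ x ∈ U, genTorsion A m X Y x = 0) :
    ∀ S : Finset (Fin s), S.Nonempty →
      Involutive U (fun x => ⨆ i ∈ S, eigenDist A (lam i) (ρ i) x) := by
  intro S _ V W hV hW hVS hWS x hx
  have hlam : ∀ i ∈ S, ContDiffOn ℝ ∞ (lam i) U := fun i _ => hreg.smooth_lam i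
  have hbracket : TorsionMapsToPrimary A lam S U 0 :=
    (torsionMapsToPrimary_of_vanishing hvan).zero hU hA hlam
  have hmem : ∀ i ∈ S.toList.flatMap (fun i => List.replicate (ρ i) i), i ∈ S := by
    simp +contextual [List.mem_flatMap, List.mem_replicate]
  exact primaryPart_le_iSup_eigenDist hreg hx S (hbracket _ _ V W hmem hmem hV hW
    (killedOn_of_mem_iSup_eigenDist S hVS) (killedOn_of_mem_iSup_eigenDist S hWS) x hx)

/-- if A is spectrally regular and τ⁽ᵐ⁾_A ≡ 0 on U for some m ≥ 1, then
every direct sum ⊕_{i∈S} D_i of generalized eigen-distributions (S nonempty) is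
involutive; in particular each D_i is. -/
theorem eigenDist_sums_involutive {n : ℕ} (U : Set (Vec n)) (hU : IsOpen U)
    (A : OpField n) (hA : ContDiffOn ℝ (⊤ : ℕ∞) A U)
    (s : ℕ) (lam : Fin s → Vec n → ℝ) (ρ r : Fin s → ℕ)
    (hreg : SpectralRegular U A s lam ρ r)
    (m : ℕ) (hm : 1 ≤ m)
    (hvan : ∀ X Y : VF n, ContDiffOn ℝ (⊤ : ℕ∞) X U → ContDiffOn ℝ (⊤ : ℕ∞) Y U →
      ∀ x ∈ U, genTorsion A m X Y x = 0) :
    ∀ S : Finset (Fin s), S.Nonempty →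
      Involutive U (fun x => ⨆ i ∈ S, eigenDist A (lam i) (ρ i) x) :=
  eigenDist_sums_involutive_general U hU A hA s lam ρ r hreg m hvan
end
end
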